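/- Let $\chi \in (0,3)$, $k = \chi - 1/2$, and $\pi_\chi(x) = c_1\beta_1 e^{-\alpha_1 x}\Theta_k(x\beta_1)$ for $x > 0$, with $c_1, \alpha_1, \beta_1 > 0$ and $\Theta_k(x) = \delta_{k,0} + 2\sum_{n\ge1} n^{2k} e^{-n^2 x}$. Then $\pi_\chi(x) \sim \Gamma(\chi)\, c_1 \beta_1^{1-\chi} x^{-\chi}$ as $x \to 0^+$, i.e., $\lim_{x\to0^+} x^{\chi}\pi_\chi(x) = \Gamma(\chi) c_1\beta_1^{1-\chi}$. -/

import Mathlib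

open Filter MeasureTheory Set Real

noncomputable def Theta (k x : ℝ) : ℝ :=
  (if k = 0 then (1 : ℝ) else 0) +
    2 * ∑' n : ℕ, ((n : ℝ) + 1) ^ (2 * k) * Real.exp (-((n : ℝ) + 1) ^ 2 * x)

/-! With `h = √y`, the sum `y ^ (k + 1/2) ∑ n ^ (2k) e^(-n² y)` equals `h ∑ g (h n)` for
`g t = t ^ (2k) e^(-t²)`: a Riemann sum of `g` over `(0, ∞)` with mesh `h`. It is the integral of
the step function `t ↦ g (h ⌈t / h⌉)`, which is dominated uniformly in `h ≤ 1` because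
`t ≤ h ⌈t / h⌉ ≤ t + 1`, so dominated convergence gives `∫₀^∞ g = Γ(k + 1/2) / 2` as `h → 0`.
The constant term `δ_{k,0}` of `Θ_k` disappears against `y ^ (k + 1/2) → 0`. -/

open Topology

section RiemannSum

variable {E : Type*} [NormedAddCommGroup E] [NormedSpace ℝ E] [CompleteSpace E]

lemma natCeil_div_eq_succ_iff {h t : ℝ} (hh : 0 < h) (n : ℕ) :
    ⌈t / h⌉₊ = n + 1 ↔ t ∈ Ioc (h * n) (h * (n + 1)) := by
  rw [Nat.ceil_eq_iff n.succ_ne_zero, lt_div_iff₀ hh, div_le_iff₀ hh]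
  simp [mul_comm]

lemma iUnion_Ioc_mul_natCast {h : ℝ} (hh : 0 < h) :
    ⋃ n : ℕ, Ioc (h * n) (h * (n + 1)) = Ioi 0 := by
  ext t
  simp only [mem_iUnion, mem_Ioi]
  constructor
  · rintro ⟨n, hn, -⟩
    exact lt_of_le_of_lt (by positivity) hn
  · intro ht
    obtain ⟨n, hn⟩ := Nat.exists_eq_add_one_of_ne_zero (Nat.ceil_pos.2 (div_pos ht hh)).ne'
    exact ⟨n, (natCeil_div_eq_succ_iff hh n).1 hn⟩

lemma hasSum_smul_of_integrableOn_ceil {g : ℝ → E} {h : ℝ} (hh : 0 < h)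
    (hint : IntegrableOn (fun t => g (h * ⌈t / h⌉₊)) (Ioi 0)) :
    HasSum (fun n : ℕ => h • g (h * (n + 1))) (∫ t in Ioi 0, g (h * ⌈t / h⌉₊)) := by
  rw [← iUnion_Ioc_mul_natCast hh] at hint ⊢
  refine (hasSum_integral_iUnion (fun _ => measurableSet_Ioc) ?_ hint).congr_fun fun n => ?_
  · intro m n hmn
    refine Set.disjoint_left.2 fun t htm htn => hmn ?_
    have := ((natCeil_div_eq_succ_iff hh m).2 htm).symm.trans
      ((natCeil_div_eq_succ_iff hh n).2 htn)
    omega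
  · rw [setIntegral_congr_fun measurableSet_Ioc fun t ht => by
      rw [(natCeil_div_eq_succ_iff hh n).2 ht], setIntegral_const]
    simp [Measure.real, Real.volume_Ioc, hh.le, mul_add]

lemma le_mul_natCeil_div {h t : ℝ} (hh : 0 < h) (ht : 0 ≤ t) :
    t ≤ h * ⌈t / h⌉₊ ∧ h * ⌈t / h⌉₊ < t + h := by
  constructor
  · rw [← div_le_iff₀' hh]; exact Nat.le_ceil _
  · calc h * ⌈t / h⌉₊ < h * (t / h + 1) := by gcongr; exact Nat.ceil_lt_add_one (by positivity)
      _ = t + h := by field_simp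

theorem tendsto_smul_tsum_of_dominated {g : ℝ → E} {G : ℝ → ℝ} (hgm : StronglyMeasurable g)
    (hgc : ContinuousOn g (Ioi 0)) (hG : IntegrableOn G (Ioi 0))
    (hgG : ∀ t s, 0 < t → t ≤ s → s ≤ t + 1 → ‖g s‖ ≤ G t) :
    Tendsto (fun h : ℝ => h • ∑' n : ℕ, g (h * (n + 1))) (𝓝[>] 0) (𝓝 (∫ t in Ioi 0, g t)) := by
  set step : ℝ → ℝ → E := fun h t => g (h * ⌈t / h⌉₊)
  have step_meas (h : ℝ) : AEStronglyMeasurable (step h) (volume.restrict (Ioi 0)) :=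
    (hgm.comp_measurable (by fun_prop)).aestronglyMeasurable
  have step_le {h : ℝ} (hh : h ∈ Ioc 0 1) : ∀ᵐ t ∂volume.restrict (Ioi 0), ‖step h t‖ ≤ G t := by
    filter_upwards [ae_restrict_mem measurableSet_Ioi] with t (ht : 0 < t)
    obtain ⟨hlo, hhi⟩ := le_mul_natCeil_div hh.1 ht.le
    exact hgG t _ ht hlo (by linarith [hh.2])
  have step_tendsto : ∀ᵐ t ∂volume.restrict (Ioi 0), Tendsto (step · t) (𝓝[>] 0) (𝓝 (g t)) := by
    filter_upwards [ae_restrict_mem measurableSet_Ioi] with t (ht : 0 < t)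
    refine (hgc.continuousAt (Ioi_mem_nhds ht)).tendsto.comp ?_
    have hupper : Tendsto (fun h : ℝ => t + h) (𝓝[>] 0) (𝓝 t) := by
      simpa using ((continuous_const_add t).tendsto 0).mono_left nhdsWithin_le_nhds
    refine tendsto_of_tendsto_of_tendsto_of_le_of_le' tendsto_const_nhds hupper ?_ ?_ <;>
      filter_upwards [self_mem_nhdsWithin] with h (hh : 0 < h)
    exacts [(le_mul_natCeil_div hh ht.le).1, (le_mul_natCeil_div hh ht.le).2.le]
  have hsmall : Ioc (0 : ℝ) 1 ∈ 𝓝[>] 0 := Ioc_mem_nhdsGT one_pos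
  refine (tendsto_integral_filter_of_dominated_convergence G (.of_forall step_meas)
    (eventually_of_mem hsmall fun h hh => step_le hh) hG step_tendsto).congr' ?_
  filter_upwards [hsmall] with h hh
  rw [← tsum_const_smul'']
  exact ((hasSum_smul_of_integrableOn_ceil hh.1
    (Integrable.mono' hG (step_meas h) (step_le hh))).tsum_eq).symm

end RiemannSum

lemma rpow_le_of_le_of_le_add_one {p t s : ℝ} (ht : 0 < t) (hts : t ≤ s) (hst : s ≤ t + 1) :
    s ^ p ≤ (1 + 2 ^ p) * t ^ p + 2 ^ p := by
  have htp : 0 ≤ t ^ p := by positivity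
  have h2p : 0 ≤ (2 : ℝ) ^ p := by positivity
  rcases le_total p 0 with hp | hp
  · nlinarith [rpow_le_rpow_of_nonpos ht hts hp]
  rcases le_total t 1 with ht1 | ht1
  · nlinarith [rpow_le_rpow (ht.le.trans hts) (show s ≤ 2 by linarith) hp]
  · have : s ^ p ≤ 2 ^ p * t ^ p := by
      rw [← mul_rpow zero_le_two ht.le]
      exact rpow_le_rpow (ht.le.trans hts) (by linarith) hp
    nlinarith

lemma integral_rpow_mul_exp_neg_sq {p : ℝ} (hp : -1 < p) :
    ∫ t in Ioi 0, t ^ p * exp (-t ^ 2) = Gamma ((p + 1) / 2) / 2 := by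
  simp_rw [← rpow_two, integral_rpow_mul_exp_neg_rpow two_pos hp]
  ring

theorem tendsto_rpow_mul_tsum_rpow_mul_exp {p : ℝ} (hp : -1 < p) :
    Tendsto (fun h : ℝ =>
        h ^ (p + 1) * ∑' n : ℕ, ((n : ℝ) + 1) ^ p * exp (-((n : ℝ) + 1) ^ 2 * h ^ 2)) (𝓝[>] 0)
      (𝓝 (Gamma ((p + 1) / 2) / 2)) := by
  have hG : IntegrableOn (fun t : ℝ => (1 + 2 ^ p) * (t ^ p * exp (-t ^ 2)) + 2 ^ p * exp (-t ^ 2))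
      (Ioi 0) := by
    have hpow := integrableOn_rpow_mul_exp_neg_mul_sq one_pos hp
    have hexp := (integrable_exp_neg_mul_sq one_pos).integrableOn (s := Ioi (0 : ℝ))
    simp only [neg_mul, one_mul] at hpow hexp
    exact (hpow.const_mul _).add (hexp.const_mul _)
  have hbound (t s : ℝ) (ht : 0 < t) (hts : t ≤ s) (hst : s ≤ t + 1) :
      ‖s ^ p * exp (-s ^ 2)‖ ≤ (1 + 2 ^ p) * (t ^ p * exp (-t ^ 2)) + 2 ^ p * exp (-t ^ 2) := by
    rw [norm_of_nonneg (mul_nonneg (rpow_nonneg (ht.le.trans hts) _) (exp_pos _).le)]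
    calc s ^ p * exp (-s ^ 2) ≤ ((1 + 2 ^ p) * t ^ p + 2 ^ p) * exp (-t ^ 2) := by
          gcongr
          exact rpow_le_of_le_of_le_add_one ht hts hst
      _ = _ := by ring
  rw [← integral_rpow_mul_exp_neg_sq hp]
  refine (tendsto_smul_tsum_of_dominated (g := fun t => t ^ p * exp (-t ^ 2))
    (by fun_prop : Measurable _).stronglyMeasurable
    ((continuousOn_id.rpow_const fun t ht => Or.inl (ne_of_gt ht)).mul (by fun_prop))
    hG hbound).congr' ?_
  filter_upwards [self_mem_nhdsWithin] with h (hh : 0 < h)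
  have hsummand (n : ℕ) : (h * (n + 1)) ^ p * exp (-(h * (n + 1)) ^ 2)
      = h ^ p * (((n : ℝ) + 1) ^ p * exp (-((n : ℝ) + 1) ^ 2 * h ^ 2)) := by
    rw [mul_rpow hh.le (by positivity)]
    ring_nf
  simp_rw [hsummand, tsum_mul_left, smul_eq_mul, rpow_add_one hh.ne']
  ring

theorem tendsto_rpow_mul_Theta {k : ℝ} (hk : 0 < k + 1 / 2) :
    Tendsto (fun y : ℝ => y ^ (k + 1 / 2) * Theta k y) (𝓝[>] 0) (𝓝 (Gamma (k + 1 / 2))) := by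
  have hsqrt : Tendsto sqrt (𝓝[>] 0) (𝓝[>] 0) := by
    refine tendsto_nhdsWithin_of_tendsto_nhds_of_eventually_within _ ?_ ?_
    · simpa using (continuous_sqrt.tendsto 0).mono_left nhdsWithin_le_nhds
    · filter_upwards [self_mem_nhdsWithin] with y (hy : 0 < y) using sqrt_pos.2 hy
  have hsum := (tendsto_rpow_mul_tsum_rpow_mul_exp (p := 2 * k) (by linarith)).comp hsqrt
  have hpow : Tendsto (fun y : ℝ => y ^ (k + 1 / 2)) (𝓝[>] 0) (𝓝 0) := by
    have := (continuousAt_rpow_const 0 (k + 1 / 2) (Or.inr hk.le)).tendsto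
    rw [zero_rpow hk.ne'] at this
    exact this.mono_left nhdsWithin_le_nhds
  have hlim := (hpow.const_mul (if k = 0 then (1 : ℝ) else 0)).add (hsum.const_mul 2)
  rw [show (2 * k + 1) / 2 = k + 1 / 2 by ring, mul_zero, zero_add,
    mul_div_cancel₀ _ two_ne_zero] at hlim
  refine hlim.congr' ?_
  filter_upwards [self_mem_nhdsWithin] with y (hy : 0 < y)
  rw [Function.comp_apply, sq_sqrt hy.le, sqrt_eq_rpow, ← rpow_mul hy.le, Theta,
    show 1 / 2 * (2 * k + 1) = k + 1 / 2 by ring]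
  ring

theorem stmt10_general (χ c₁ α₁ β₁ : ℝ) (hχ : χ ∈ Ioo (0 : ℝ) 3)
    (hβ₁ : 0 < β₁)
    (k : ℝ) (hk : k = χ - 1 / 2) :
    Tendsto (fun x : ℝ => x ^ χ * (c₁ * β₁ * Real.exp (-α₁ * x) * Theta k (x * β₁)))
      (nhdsWithin 0 (Ioi 0))
      (nhds (Real.Gamma χ * c₁ * β₁ ^ (1 - χ))) := by
  have hχk : k + 1 / 2 = χ := by rw [hk]; ring
  have hscale : Tendsto (β₁ * ·) (𝓝[>] 0) (𝓝[>] 0) :=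
    tendsto_iff_comap.2 (comap_mulLeft_nhdsGT_zero hβ₁).ge
  have hTheta := (tendsto_rpow_mul_Theta (hχk ▸ hχ.1)).comp hscale
  rw [hχk] at hTheta
  have hexp : Tendsto (fun x : ℝ => exp (-α₁ * x)) (𝓝[>] 0) (𝓝 1) := by
    simpa using ((by fun_prop : Continuous fun x : ℝ => exp (-α₁ * x)).tendsto 0).mono_left
      nhdsWithin_le_nhds
  rw [show Gamma χ * c₁ * β₁ ^ (1 - χ) = c₁ * β₁ ^ (1 - χ) * 1 * Gamma χ by ring]
  refine ((hexp.const_mul _).mul hTheta).congr' ?_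
  filter_upwards [self_mem_nhdsWithin] with x (hx : 0 < x)
  rw [Function.comp_apply, mul_comm β₁ x, mul_rpow hx.le hβ₁.le, rpow_sub hβ₁, rpow_one]
  field_simp

theorem stmt10 (χ c₁ α₁ β₁ : ℝ) (hχ : χ ∈ Ioo (0 : ℝ) 3)
    (hc₁ : 0 < c₁) (hα₁ : 0 < α₁) (hβ₁ : 0 < β₁)
    (k : ℝ) (hk : k = χ - 1 / 2) :
    Tendsto (fun x : ℝ => x ^ χ * (c₁ * β₁ * Real.exp (-α₁ * x) * Theta k (x * β₁)))
      (nhdsWithin 0 (Ioi 0))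
      (nhds (Real.Gamma χ * c₁ * β₁ ^ (1 - χ))) :=
  stmt10_general χ c₁ α₁ β₁ hχ hβ₁ k hk
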